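/- Let (a_n)_{n=0}^∞ be a Leja sequence on the unit circle S¹. Then limsup_{N→∞} (E_0(α_N) + N log N)/N = log(4/3). -/

import Mathlib

open Filter Topology

/-- Logarithmic energy of the first `N` points of the sequence `a`. -/
noncomputable def logEnergy (a : ℕ → ℂ) (N : ℕ) : ℝ :=
  ∑ i ∈ Finset.range N, ∑ j ∈ Finset.range N,
    if i ≠ j then Real.log (1 / ‖a i - a j‖) else 0

/-- `a` is a Leja sequence on the unit circle: all points lie on the circle and
`a (n+1)` maximizes `∏_{i=0}^{n} |z - a i|` over the circle. -/
def IsLejaSeq (a : ℕ → ℂ) : Prop :=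
  (∀ n, ‖a n‖ = 1) ∧
  ∀ n : ℕ, ∀ z : ℂ, ‖z‖ = 1 →
    ∏ i ∈ Finset.range (n + 1), ‖z - a i‖ ≤
      ∏ i ∈ Finset.range (n + 1), ‖a (n + 1) - a i‖

/-!
On the circle a Leja sequence pairs up: `a (2t+1) = -a (2t)`, and `t ↦ a (2t) ^ 2` is again a
Leja sequence. Induction on `n` then gives `∏_{i<n} |a n - a i| = 2 ^ s(n)`, where `s(n)` is the
binary digit sum of `n`, so `E_0(α_N) = -2 log 2 · ∑_{n<N} s(n)`. The normalized energy
`log N - 2 log 2 · ∑_{n<N} s(n) / N` is at most `log (4/3)`, by induction on `N = 2^k + R` and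
Gibbs' inequality, and it tends to `log (4/3)` along `N = 2 (4^k - 1) / 3 = (1010…10)₂`.
-/

open Finset Real

lemma eq_neg_of_norm_sub_eq_add {E : Type*} [NormedAddCommGroup E] [NormedSpace ℝ E]
    [StrictConvexSpace ℝ E] {x y : E} (hxy : ‖x‖ = ‖y‖) (h : ‖x - y‖ = ‖x‖ + ‖y‖) :
    x = -y :=
  (sameRay_iff_norm_add.mpr (by rwa [norm_neg, ← sub_eq_add_neg])).eq_of_norm_eq
    (by rw [norm_neg, hxy])

lemma Complex.exists_sq_eq_of_norm_eq_one {u : ℂ} (hu : ‖u‖ = 1) :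
    ∃ z : ℂ, ‖z‖ = 1 ∧ z ^ 2 = u := by
  obtain ⟨z, rfl⟩ := IsAlgClosed.exists_pow_nat_eq u two_pos
  refine ⟨z, ?_, rfl⟩
  rwa [norm_pow, pow_eq_one_iff_of_nonneg (norm_nonneg z) two_ne_zero] at hu

lemma Complex.infinite_sphere_zero_one : (Metric.sphere (0 : ℂ) 1).Infinite :=
  (isConnected_sphere (by simp [Complex.rank_real_complex]) 0 zero_le_one).isPreconnected
    |>.infinite_of_nontrivial ⟨1, by simp, -1, by simp, by norm_num⟩

lemma Complex.norm_neg_sub_self (x : ℂ) : ‖-x - x‖ = 2 * ‖x‖ := by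
  rw [show -x - x = -(2 * x) by ring, norm_neg, norm_mul, Complex.norm_two]

lemma prod_range_two_mul_sub_of_neg {R : Type*} [CommRing R] (b : ℕ → R) (z : R) {t : ℕ}
    (hb : ∀ s < t, b (2 * s + 1) = -b (2 * s)) :
    ∏ i ∈ range (2 * t), (z - b i) = ∏ s ∈ range t, (z ^ 2 - b (2 * s) ^ 2) := by
  induction t with
  | zero => simp
  | succ t ih =>
    rw [mul_add_one, prod_range_succ, prod_range_succ, prod_range_succ,
      ih fun s hs => hb s (by omega), hb t (by omega)]
    ring

lemma prod_range_two_mul_norm_sub_of_neg {R : Type*} [SeminormedCommRing R] [NormMulClass R]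
    [NormOneClass R] (b : ℕ → R) (z : R) {t : ℕ} (hb : ∀ s < t, b (2 * s + 1) = -b (2 * s)) :
    ∏ i ∈ range (2 * t), ‖z - b i‖ = ∏ s ∈ range t, ‖z ^ 2 - b (2 * s) ^ 2‖ := by
  simp only [← norm_prod, prod_range_two_mul_sub_of_neg b z hb]

lemma sum_range_ite_ne_of_symm {M : Type*} [AddCommMonoid M] (f : ℕ → ℕ → M)
    (hf : ∀ i j, f i j = f j i) (N : ℕ) :
    ∑ i ∈ range N, ∑ j ∈ range N, (if i ≠ j then f i j else 0)
      = 2 • ∑ n ∈ range N, ∑ i ∈ range n, f n i := by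
  induction N with
  | zero => simp
  | succ N ih =>
    have hcol : ∀ i ∈ range N, (if i ≠ N then f i N else 0) = f N i := fun i hi => by
      rw [if_pos (by simp at hi; omega), hf]
    have hrow : ∀ j ∈ range N, (if N ≠ j then f N j else 0) = f N j := fun j hj => by
      rw [if_pos (by simp at hj; omega)]
    simp only [sum_range_succ, sum_add_distrib, ih, sum_congr rfl hcol, sum_congr rfl hrow,
      ne_eq, not_true_eq_false, if_false, add_zero, smul_add, two_smul]
    abel

theorem Filter.limsup_eq_of_eventually_le_of_tendsto_comp {α β γ : Type*}
    [ConditionallyCompleteLinearOrder α] [TopologicalSpace α] [OrderTopology α]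
    {f : Filter β} {g : Filter γ} [g.NeBot] {u : β → α} {φ : γ → β} {L : α}
    (hle : ∀ᶠ x in f, u x ≤ L) (hφ : Tendsto φ g f) (hlim : Tendsto (u ∘ φ) g (𝓝 L)) :
    limsup u f = L := by
  have hcob : (map φ g).IsCoboundedUnder (· ≤ ·) u := hlim.isCoboundedUnder_le
  refine le_antisymm (limsup_le_of_le (hcob.mono (map_mono hφ)) hle) ?_
  rw [← hlim.limsup_eq]
  exact hφ.limsup_comp_le_limsup hcob ⟨L, hle⟩

lemma add_mul_log_le {A R : ℝ} (hA : 0 < A) (hR : 0 < R) :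
    (A + R) * log (3 * (A + R) / 4) ≤ A * log A + R * log (3 * R) := by
  -- Gibbs' inequality for the weights `(A, R) / (A + R)` against `(3/4, 1/4)`
  have hgibbs : ∀ {x y : ℝ}, 0 < x → 0 < y → x * (log y - log x) ≤ y - x := fun {x y} hx hy =>
    calc x * (log y - log x) = x * log (y / x) := by rw [log_div hy.ne' hx.ne']
      _ ≤ x * (y / x - 1) :=
        mul_le_mul_of_nonneg_left (log_le_sub_one_of_pos (by positivity)) hx.le
      _ = y - x := by field_simp
  have h1 := hgibbs hA (by positivity : 0 < 3 * (A + R) / 4)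
  have h2 := hgibbs (by positivity : 0 < 3 * R) (by positivity : 0 < 3 * (A + R) / 4)
  linarith

def binDigitSum (n : ℕ) : ℕ := (Nat.digits 2 n).sum

def binDigitSumBelow (N : ℕ) : ℕ := ∑ n ∈ range N, binDigitSum n

lemma binDigitSum_two_mul (m : ℕ) : binDigitSum (2 * m) = binDigitSum m := by
  rcases m.eq_zero_or_pos with rfl | hm
  · rfl
  · simp [binDigitSum, Nat.digits_def' one_lt_two (by omega : 0 < 2 * m)]

lemma binDigitSum_two_mul_add_one (m : ℕ) : binDigitSum (2 * m + 1) = binDigitSum m + 1 := by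
  rw [binDigitSum, Nat.digits_def' one_lt_two (by omega), List.sum_cons,
    show (2 * m + 1) % 2 = 1 by omega, show (2 * m + 1) / 2 = m by omega, add_comm, binDigitSum]

lemma binDigitSum_add_two_pow {r k : ℕ} (hr : r < 2 ^ k) :
    binDigitSum (r + 2 ^ k) = binDigitSum r + 1 := by
  have hlen : (Nat.digits 2 r).length ≤ k := (Nat.digits_length_le_iff one_lt_two r).mpr hr
  have := Nat.digits_append_zeroes_append_digits (b := 2) (k := k - (Nat.digits 2 r).length)
    (n := r) (m := 1) one_lt_two one_pos
  rw [Nat.add_sub_cancel' hlen, mul_one] at this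
  simp only [binDigitSum, ← this, List.sum_append, List.sum_replicate, smul_zero, add_zero,
    Nat.digits_of_lt 2 1 one_ne_zero one_lt_two, List.sum_singleton]

lemma binDigitSumBelow_succ (N : ℕ) :
    binDigitSumBelow (N + 1) = binDigitSumBelow N + binDigitSum N :=
  sum_range_succ _ _

lemma binDigitSumBelow_two_mul (N : ℕ) :
    binDigitSumBelow (2 * N) = 2 * binDigitSumBelow N + N := by
  induction N with
  | zero => rfl
  | succ N ih =>
    rw [mul_add_one, binDigitSumBelow_succ, ← add_assoc, binDigitSumBelow_succ,
      binDigitSumBelow_succ, ih, binDigitSum_two_mul, binDigitSum_two_mul_add_one]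
    ring

lemma binDigitSumBelow_two_pow_add {k R : ℕ} (hR : R ≤ 2 ^ k) :
    binDigitSumBelow (2 ^ k + R) = binDigitSumBelow (2 ^ k) + R + binDigitSumBelow R := by
  have hshift : ∀ r ∈ range R, binDigitSum (2 ^ k + r) = binDigitSum r + 1 := fun r hr => by
    rw [add_comm, binDigitSum_add_two_pow (by simp at hr; omega)]
  rw [binDigitSumBelow, sum_range_add, sum_congr rfl hshift, sum_add_distrib, binDigitSumBelow,
    binDigitSumBelow]
  simp only [sum_const, card_range, smul_eq_mul, mul_one]
  ring

lemma two_mul_binDigitSumBelow_two_pow (k : ℕ) :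
    2 * binDigitSumBelow (2 ^ k) = k * 2 ^ k := by
  induction k with
  | zero => rfl
  | succ k ih =>
    rw [pow_succ, mul_two, binDigitSumBelow_two_pow_add le_rfl]
    linarith

lemma mul_log_le_binDigitSumBelow {N : ℕ} (hN : 0 < N) :
    N * log (3 * N / 4) ≤ 2 * log 2 * binDigitSumBelow N := by
  induction N using Nat.strong_induction_on with
  | _ N ih =>
  obtain ⟨k, hk, hk'⟩ : ∃ k, 2 ^ k ≤ N ∧ N < 2 ^ (k + 1) :=
    ⟨Nat.log 2 N, Nat.pow_log_le_self 2 hN.ne', Nat.lt_pow_succ_log_self one_lt_two N⟩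
  obtain ⟨R, rfl⟩ : ∃ R, N = 2 ^ k + R := ⟨N - 2 ^ k, by omega⟩
  have hR : R < 2 ^ k := by rw [pow_succ] at hk'; omega
  have hpow : 2 * log 2 * binDigitSumBelow (2 ^ k) = (2 : ℝ) ^ k * log ((2 : ℝ) ^ k) := by
    have := congr_arg (fun m : ℕ => (m : ℝ)) (two_mul_binDigitSumBelow_two_pow k)
    push_cast at this
    rw [log_pow]
    linear_combination log 2 * this
  rcases R.eq_zero_or_pos with rfl | hRpos
  · push_cast
    rw [add_zero, add_zero, hpow]
    gcongr
    linarith [pow_pos (two_pos : (0 : ℝ) < 2) k]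
  rw [binDigitSumBelow_two_pow_add hR.le]
  push_cast
  have hIH := ih R (by omega) hRpos
  have hgibbs := add_mul_log_le (A := (2 : ℝ) ^ k) (R := R) (by positivity)
    (by exact_mod_cast hRpos)
  have hlog : log (3 * (R : ℝ)) = log (3 * R / 4) + 2 * log 2 := by
    rw [log_div (by positivity) (by norm_num), show (4 : ℝ) = 2 ^ 2 by norm_num, log_pow]
    push_cast
    ring
  rw [hlog] at hgibbs
  linarith

/-- `peakIndex k = 2 (4 ^ k - 1) / 3`, with binary expansion `1010…10`. -/
def peakIndex : ℕ → ℕ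
  | 0 => 0
  | k + 1 => 4 * peakIndex k + 2

lemma strictMono_peakIndex : StrictMono peakIndex :=
  strictMono_nat_of_lt_succ fun k => by simp only [peakIndex]; omega

lemma three_mul_peakIndex_add_two (k : ℕ) : 3 * peakIndex k + 2 = 2 * 4 ^ k := by
  induction k with
  | zero => rfl
  | succ k ih => rw [peakIndex, pow_succ]; omega

lemma binDigitSum_peakIndex (k : ℕ) : binDigitSum (peakIndex k) = k := by
  induction k with
  | zero => rfl
  | succ k ih =>
    rw [peakIndex, show 4 * peakIndex k + 2 = 2 * (2 * peakIndex k + 1) by ring,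
      binDigitSum_two_mul, binDigitSum_two_mul_add_one, ih]

lemma binDigitSumBelow_peakIndex (k : ℕ) :
    2 * binDigitSumBelow (peakIndex k) + peakIndex k = 2 * k * peakIndex k := by
  induction k with
  | zero => rfl
  | succ k ih =>
    rw [peakIndex, show 4 * peakIndex k + 2 = 2 * (2 * peakIndex k + 1) by ring,
      binDigitSumBelow_two_mul, binDigitSumBelow_succ, binDigitSumBelow_two_mul,
      binDigitSum_two_mul, binDigitSum_peakIndex]
    nlinarith

namespace IsLejaSeq

variable {a : ℕ → ℂ}

lemma prod_le (ha : IsLejaSeq a) (n : ℕ) {z : ℂ} (hz : ‖z‖ = 1) :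
    ∏ i ∈ range n, ‖z - a i‖ ≤ ∏ i ∈ range n, ‖a n - a i‖ := by
  cases n with
  | zero => simp
  | succ n => exact ha.2 n z hz

lemma prod_pos (ha : IsLejaSeq a) (n : ℕ) : 0 < ∏ i ∈ range n, ‖a n - a i‖ := by
  obtain ⟨z, hz, hza⟩ :=
    Complex.infinite_sphere_zero_one.exists_notMem_finset ((range n).image a)
  rw [mem_sphere_zero_iff_norm] at hz
  refine (Finset.prod_pos fun i hi => norm_pos_iff.mpr (sub_ne_zero.mpr ?_)).trans_le
    (ha.prod_le n hz)
  rintro rfl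
  exact hza (mem_image_of_mem a hi)

lemma odd_eq_neg_even (ha : IsLejaSeq a) (t : ℕ) : a (2 * t + 1) = -a (2 * t) := by
  induction t using Nat.strong_induction_on with
  | _ t ih =>
  set P : ℂ → ℝ := fun u => ∏ s ∈ range t, ‖u - a (2 * s) ^ 2‖
  have hfactor : ∀ z, ∏ i ∈ range (2 * t), ‖z - a i‖ = P (z ^ 2) :=
    fun z => prod_range_two_mul_norm_sub_of_neg a z ih
  have hmax : ∀ u : ℂ, ‖u‖ = 1 → P u ≤ P (a (2 * t) ^ 2) := by
    intro u hu
    obtain ⟨z, hz, rfl⟩ := Complex.exists_sq_eq_of_norm_eq_one hu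
    rw [← hfactor, ← hfactor]
    exact ha.prod_le (2 * t) hz
  have hP : 0 < P (a (2 * t) ^ 2) := hfactor (a (2 * t)) ▸ ha.prod_pos (2 * t)
  have hnorm : ‖a (2 * t)‖ = 1 := ha.1 _
  -- the antipode `-a (2t)` realizes both maxima at once
  have hanti : P (a (2 * t) ^ 2) * 2 ≤ P (a (2 * t + 1) ^ 2) * ‖a (2 * t + 1) - a (2 * t)‖ := by
    have := ha.prod_le (2 * t + 1) (z := -a (2 * t)) (by rw [norm_neg, hnorm])
    rwa [prod_range_succ, prod_range_succ, hfactor, hfactor, neg_sq,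
      Complex.norm_neg_sub_self, hnorm, mul_one] at this
  have hle : P (a (2 * t + 1) ^ 2) * ‖a (2 * t + 1) - a (2 * t)‖
      ≤ P (a (2 * t) ^ 2) * ‖a (2 * t + 1) - a (2 * t)‖ :=
    mul_le_mul_of_nonneg_right (hmax _ (by rw [norm_pow, ha.1, one_pow])) (norm_nonneg _)
  have hdist : 2 ≤ ‖a (2 * t + 1) - a (2 * t)‖ := le_of_mul_le_mul_left (hanti.trans hle) hP
  refine eq_neg_of_norm_sub_eq_add (by rw [ha.1, hnorm]) (le_antisymm (norm_sub_le _ _) ?_)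
  rwa [ha.1, hnorm, one_add_one_eq_two]

lemma prod_range_two_mul_norm_sub (ha : IsLejaSeq a) (z : ℂ) (t : ℕ) :
    ∏ i ∈ range (2 * t), ‖z - a i‖ = ∏ s ∈ range t, ‖z ^ 2 - a (2 * s) ^ 2‖ :=
  prod_range_two_mul_norm_sub_of_neg a z fun s _ => ha.odd_eq_neg_even s

lemma sq_even (ha : IsLejaSeq a) : IsLejaSeq fun t => a (2 * t) ^ 2 := by
  refine ⟨fun t => by rw [norm_pow, ha.1, one_pow], fun n u hu => ?_⟩
  obtain ⟨z, hz, rfl⟩ := Complex.exists_sq_eq_of_norm_eq_one hu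
  rw [← ha.prod_range_two_mul_norm_sub, ← ha.prod_range_two_mul_norm_sub]
  exact ha.prod_le (2 * (n + 1)) hz

lemma prod_norm_sub_even (ha : IsLejaSeq a) (t : ℕ) :
    ∏ i ∈ range (2 * t), ‖a (2 * t) - a i‖ = ∏ s ∈ range t, ‖a (2 * t) ^ 2 - a (2 * s) ^ 2‖ :=
  ha.prod_range_two_mul_norm_sub _ t

lemma prod_norm_sub_odd (ha : IsLejaSeq a) (t : ℕ) :
    ∏ i ∈ range (2 * t + 1), ‖a (2 * t + 1) - a i‖
      = 2 * ∏ s ∈ range t, ‖a (2 * t) ^ 2 - a (2 * s) ^ 2‖ := by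
  rw [prod_range_succ, ha.prod_range_two_mul_norm_sub, ha.odd_eq_neg_even, neg_sq,
    Complex.norm_neg_sub_self, ha.1, mul_one, mul_comm]

lemma prod_norm_sub_eq_two_pow (ha : IsLejaSeq a) (n : ℕ) :
    ∏ i ∈ range n, ‖a n - a i‖ = 2 ^ binDigitSum n := by
  induction n using Nat.strong_induction_on generalizing a with
  | _ n ih =>
  obtain ⟨t, rfl | rfl⟩ := n.even_or_odd'
  · rcases t.eq_zero_or_pos with rfl | ht
    · simp [binDigitSum]
    rw [ha.prod_norm_sub_even, binDigitSum_two_mul]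
    exact ih t (by omega) ha.sq_even
  · rw [ha.prod_norm_sub_odd, binDigitSum_two_mul_add_one, ih t (by omega) ha.sq_even, pow_succ']

lemma logEnergy_eq (ha : IsLejaSeq a) (N : ℕ) :
    logEnergy a N = -(2 * log 2 * binDigitSumBelow N) := by
  have hrow : ∀ n, ∑ i ∈ range n, log (1 / ‖a n - a i‖) = -(binDigitSum n * log 2) := by
    intro n
    have hne : ∀ i ∈ range n, ‖a n - a i‖ ≠ 0 := prod_ne_zero_iff.mp (ha.prod_pos n).ne'
    simp only [one_div, log_inv, sum_neg_distrib]
    rw [← log_prod hne, ha.prod_norm_sub_eq_two_pow, log_pow]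
  rw [logEnergy, sum_range_ite_ne_of_symm _ (fun i j => by rw [norm_sub_rev]),
    sum_congr rfl fun n _ => hrow n, binDigitSumBelow, sum_neg_distrib, ← sum_mul, nsmul_eq_mul]
  push_cast
  ring

end IsLejaSeq

noncomputable def energyProfile (N : ℕ) : ℝ := log N - 2 * log 2 * binDigitSumBelow N / N

lemma energyProfile_le (N : ℕ) : energyProfile N ≤ log (4 / 3) := by
  rcases N.eq_zero_or_pos with rfl | hN
  · simpa [energyProfile] using log_nonneg (by norm_num)
  have hN' : (0 : ℝ) < N := by exact_mod_cast hN
  have h := mul_log_le_binDigitSumBelow hN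
  rw [show 3 * (N : ℝ) / 4 = N / (4 / 3) by ring, log_div hN'.ne' (by norm_num)] at h
  have : log N - log (4 / 3) ≤ 2 * log 2 * binDigitSumBelow N / N := by
    rwa [le_div_iff₀ hN', mul_comm]
  rw [energyProfile]
  linarith

lemma energyProfile_peakIndex (k : ℕ) :
    energyProfile (peakIndex k) = log (4 / 3 * (1 - (1 / 4) ^ k)) := by
  rcases k.eq_zero_or_pos with rfl | hk
  · simp [energyProfile, peakIndex]
  have hN : (0 : ℝ) < peakIndex k := by exact_mod_cast strictMono_peakIndex hk
  have hT : 2 * (binDigitSumBelow (peakIndex k) : ℝ) = (2 * k - 1) * peakIndex k := by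
    have := congr_arg (fun m : ℕ => (m : ℝ)) (binDigitSumBelow_peakIndex k)
    push_cast at this
    linarith
  have hpeak : 4 / 3 * (1 - (1 / 4 : ℝ) ^ k) = 2 * peakIndex k / 4 ^ k := by
    have := congr_arg (fun m : ℕ => (m : ℝ)) (three_mul_peakIndex_add_two k)
    push_cast at this
    rw [one_div_pow]
    field_simp
    linarith
  rw [energyProfile, hpeak, log_div (by positivity) (by positivity), log_mul two_ne_zero hN.ne',
    log_pow, show (4 : ℝ) = 2 ^ 2 by norm_num, log_pow, mul_comm 2 (log 2), mul_assoc, hT]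
  field_simp
  push_cast
  ring

lemma tendsto_energyProfile_peakIndex :
    Tendsto (energyProfile ∘ peakIndex) atTop (𝓝 (log (4 / 3))) := by
  have h : Tendsto (fun k : ℕ => 4 / 3 * (1 - (1 / 4 : ℝ) ^ k)) atTop (𝓝 (4 / 3 * (1 - 0))) :=
    ((tendsto_pow_atTop_nhds_zero_of_lt_one (by norm_num) (by norm_num)).const_sub 1).const_mul _
  rw [sub_zero, mul_one] at h
  simpa only [Function.comp_def, energyProfile_peakIndex] using h.log (by norm_num)

theorem leja_logEnergy_limsup (a : ℕ → ℂ) (ha : IsLejaSeq a) :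
    Filter.limsup (fun N : ℕ => (logEnergy a N + (N : ℝ) * Real.log N) / (N : ℝ)) atTop
      = Real.log (4 / 3) := by
  have hprofile : (fun N : ℕ => (logEnergy a N + (N : ℝ) * Real.log N) / (N : ℝ))
      = energyProfile := by
    funext N
    rw [ha.logEnergy_eq, energyProfile]
    rcases N.eq_zero_or_pos with rfl | hN
    · simp
    · field_simp
      ring
  rw [hprofile]
  exact limsup_eq_of_eventually_le_of_tendsto_comp (.of_forall energyProfile_le)
    strictMono_peakIndex.tendsto_atTop tendsto_energyProfile_peakIndex
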